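/- Let A¹, A², A³ : ℝ³ → M₂(ℂ) be smooth with A^α(x) Hermitian and trace-free for every x, and such that Σ_α p_α A^α(x) is invertible for every x and every p ∈ ℝ³ \ {0}. Define g^{αβ}(x) by −det(Σ_α p_α A^α(x)) = Σ_{α,β} g^{αβ}(x) p_α p_β and let (g_{αβ}(x)) be the inverse matrix. Then there exists a smooth function f : ℝ³ → ℝ such that for every x: −(i/16) Σ_{α,β} g_{αβ}(x) Σ_γ [(∂_γA^α)A^βA^γ − A^γA^β(∂_γA^α) + (∂_γA^β)A^αA^γ − A^γA^α(∂_γA^β)](x) = f(x)·I, where I is the 2×2 identity matrix and ∂_γ := ∂/∂x^γ. -/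

import Mathlib

open Matrix

noncomputable section

/-- Entrywise partial derivative `∂F/∂x^γ` of a matrix-valued function on `ℝ³`. -/
def pdM (γ : Fin 3) (F : (Fin 3 → ℝ) → Matrix (Fin 2) (Fin 2) ℂ)
    (x : Fin 3 → ℝ) : Matrix (Fin 2) (Fin 2) ℂ :=
  Matrix.of fun i j => fderiv ℝ (fun y => F y i j) x (Pi.single γ 1)

namespace CorrectionAux

lemma tracefree_eq (X : Matrix (Fin 2) (Fin 2) ℂ) (hX : X.trace = 0) : X 1 1 = -X 0 0 := by
  simp [Matrix.trace, Fin.sum_univ_two] at hX; linear_combination hX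

/-- Key algebraic fact: for trace-free `2×2` matrices, `XYZ - ZYX` is scalar. -/
lemma key (X Y Z : Matrix (Fin 2) (Fin 2) ℂ) (hX : X.trace = 0) (hY : Y.trace = 0)
    (hZ : Z.trace = 0) :
    X*Y*Z - Z*Y*X = ((X*Y*Z - Z*Y*X) 0 0) • 1 := by
  have hX' := tracefree_eq X hX
  have hY' := tracefree_eq Y hY
  have hZ' := tracefree_eq Z hZ
  ext i j
  fin_cases i <;> fin_cases j <;>
    simp [Matrix.mul_apply, Fin.sum_univ_two, Matrix.one_apply, hX', hY', hZ'] <;> ring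

/-- Entrywise smoothness of a matrix-valued function. -/
def CD (M : (Fin 3 → ℝ) → Matrix (Fin 2) (Fin 2) ℂ) : Prop :=
  ∀ i j, ContDiff ℝ (⊤ : ℕ∞) (fun x => M x i j)

lemma CD.mul {M N} (hM : CD M) (hN : CD N) : CD (fun x => M x * N x) := by
  intro i j
  have h : (fun x => (M x * N x) i j) = fun x => ∑ k, M x i k * N x k j := by
    funext x; rw [Matrix.mul_apply]
  rw [h]
  exact ContDiff.sum fun k _ => (hM i k).mul (hN k j)

lemma CD.add {M N} (hM : CD M) (hN : CD N) : CD (fun x => M x + N x) := by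
  intro i j
  have h : (fun x => (M x + N x) i j) = fun x => M x i j + N x i j := rfl
  rw [h]; exact (hM i j).add (hN i j)

lemma CD.sub {M N} (hM : CD M) (hN : CD N) : CD (fun x => M x - N x) := by
  intro i j
  have h : (fun x => (M x - N x) i j) = fun x => M x i j - N x i j := rfl
  rw [h]; exact (hM i j).sub (hN i j)

lemma CD.smul {c : (Fin 3 → ℝ) → ℂ} {M} (hc : ContDiff ℝ (⊤ : ℕ∞) c) (hM : CD M) :
    CD (fun x => c x • M x) := by
  intro i j
  have h : (fun x => (c x • M x) i j) = fun x => c x * M x i j := rfl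
  rw [h]; exact hc.mul (hM i j)

lemma CD.sum {ι : Type*} (s : Finset ι) (F : ι → (Fin 3 → ℝ) → Matrix (Fin 2) (Fin 2) ℂ)
    (h : ∀ k ∈ s, CD (F k)) : CD (fun x => ∑ k ∈ s, F k x) := by
  intro i j
  have he : (fun x => (∑ k ∈ s, F k x) i j) = fun x => ∑ k ∈ s, F k x i j := by
    funext x; simp [Matrix.sum_apply]
  rw [he]
  exact ContDiff.sum fun k hk => h k hk i j

lemma pdM_star (F : (Fin 3 → ℝ) → Matrix (Fin 2) (Fin 2) ℂ)
    (hF : ∀ y, (F y).IsHermitian) (γ : Fin 3) (x : Fin 3 → ℝ) :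
    star (pdM γ F x) = pdM γ F x := by
  ext i j
  rw [Matrix.star_eq_conjTranspose, Matrix.conjTranspose_apply]
  show star (fderiv ℝ (fun y => F y j i) x (Pi.single γ 1))
      = fderiv ℝ (fun y => F y i j) x (Pi.single γ 1)
  have h1 : (fun y => F y i j) = fun y => star (F y j i) := by
    funext y
    rw [← Matrix.conjTranspose_apply, (hF y).eq]
  rw [h1, fderiv_star]
  simp

lemma pdM_trace (F : (Fin 3 → ℝ) → Matrix (Fin 2) (Fin 2) ℂ)
    (hF : ∀ i j, ContDiff ℝ (⊤ : ℕ∞) (fun x => F x i j))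
    (hTr : ∀ x, (F x).trace = 0) (γ : Fin 3) (x : Fin 3 → ℝ) :
    (pdM γ F x).trace = 0 := by
  have hd0 : DifferentiableAt ℝ (fun y => F y 0 0) x :=
    ((hF 0 0).differentiable (by simp)).differentiableAt
  have hd1 : DifferentiableAt ℝ (fun y => F y 1 1) x :=
    ((hF 1 1).differentiable (by simp)).differentiableAt
  have h1 : (fun y => F y 0 0 + F y 1 1) = fun _ => (0:ℂ) := by
    funext y
    have := hTr y
    simpa [Matrix.trace, Fin.sum_univ_two] using this
  have h2 : fderiv ℝ (fun y => F y 0 0) x + fderiv ℝ (fun y => F y 1 1) x = 0 := by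
    rw [← fderiv_fun_add hd0 hd1, h1]
    simp
  have h3 := congrArg (fun L => L (Pi.single γ (1:ℝ))) h2
  simp only [ContinuousLinearMap.add_apply, ContinuousLinearMap.zero_apply] at h3
  simp only [Matrix.trace, Fin.sum_univ_two, pdM, Matrix.diag, Matrix.of_apply]
  exact h3

end CorrectionAux

open CorrectionAux

/-- For a `2×2` first order operator on `ℝ³` with trace-free elliptic
Hermitian principal symbol `Σ_α p_α A^α(x)` and metric `g^{αβ}` defined by
`-det(Σ p_α A^α) = Σ g^{αβ}p_αp_β`, `(g_{αβ}) = G⁻¹`, the correction term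
`-(i/16) Σ_{α,β} g_{αβ} Σ_γ [(∂_γA^α)A^βA^γ - A^γA^β(∂_γA^α)
  + (∂_γA^β)A^αA^γ - A^γA^α(∂_γA^β)]`
is a smooth real scalar multiple of the identity matrix. -/
theorem correction_term_is_scalar
    (A : Fin 3 → (Fin 3 → ℝ) → Matrix (Fin 2) (Fin 2) ℂ)
    (hA : ∀ α i j, ContDiff ℝ (⊤ : ℕ∞) (fun x => A α x i j))
    (hAHerm : ∀ α x, (A α x).IsHermitian)
    (hATr : ∀ α x, (A α x).trace = 0)
    (hell : ∀ (x : Fin 3 → ℝ) (p : Fin 3 → ℝ), p ≠ 0 → IsUnit (∑ α, (p α : ℂ) • A α x))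
    (G : (Fin 3 → ℝ) → Matrix (Fin 3) (Fin 3) ℝ)
    (hGsymm : ∀ x, (G x).IsSymm)
    (hG : ∀ (x : Fin 3 → ℝ) (p : Fin 3 → ℝ),
      -(∑ α, (p α : ℂ) • A α x).det = ((∑ α, ∑ β, G x α β * p α * p β : ℝ) : ℂ)) :
    ∃ f : (Fin 3 → ℝ) → ℝ, ContDiff ℝ (⊤ : ℕ∞) f ∧
      ∀ x : Fin 3 → ℝ,
        -(Complex.I / 16) • ∑ α, ∑ β, (((G x)⁻¹ α β : ℝ) : ℂ) • ∑ γ,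
            (pdM γ (A α) x * A β x * A γ x - A γ x * A β x * pdM γ (A α) x
              + pdM γ (A β) x * A α x * A γ x - A γ x * A α x * pdM γ (A β) x)
          = ((f x : ℝ) : ℂ) • (1 : Matrix (Fin 2) (Fin 2) ℂ) := by
  -- the big matrix expression
  set E : (Fin 3 → ℝ) → Matrix (Fin 2) (Fin 2) ℂ := fun x =>
    -(Complex.I / 16) • ∑ α, ∑ β, (((G x)⁻¹ α β : ℝ) : ℂ) • ∑ γ,
      (pdM γ (A α) x * A β x * A γ x - A γ x * A β x * pdM γ (A α) x
        + pdM γ (A β) x * A α x * A γ x - A γ x * A α x * pdM γ (A β) x) with hEdef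
  -- ## Step 1: smoothness of the entries of G
  have sum_single : ∀ (M : Matrix (Fin 3) (Fin 3) ℝ) (a b : Fin 3),
      ∑ μ, ∑ ν, M μ ν * ((Pi.single a 1 + Pi.single b 1 : Fin 3 → ℝ) μ)
        * ((Pi.single a 1 + Pi.single b 1 : Fin 3 → ℝ) ν)
        = M a a + M a b + M b a + M b b := by
    intro M a b
    simp [Pi.single_apply, mul_add, add_mul, Finset.sum_add_distrib, mul_ite, ite_mul,
      Finset.sum_ite_eq, Finset.sum_ite_eq']
    ring
  have hqR : ∀ (a b : Fin 3) x, G x a a + G x a b + G x b a + G x b b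
      = (-(∑ μ, (((Pi.single a 1 + Pi.single b 1 : Fin 3 → ℝ) μ : ℝ) : ℂ) • A μ x).det).re := by
    intro a b x
    have h := hG x (Pi.single a 1 + Pi.single b 1)
    rw [sum_single (G x) a b] at h
    have := congrArg Complex.re h
    rw [Complex.ofReal_re] at this
    exact this.symm
  have hDCD : ∀ (a b : Fin 3), ContDiff ℝ (⊤ : ℕ∞) (fun x =>
      (-(∑ μ, (((Pi.single a 1 + Pi.single b 1 : Fin 3 → ℝ) μ : ℝ) : ℂ) • A μ x).det).re) := by
    intro a b
    have hN : ∀ (i j : Fin 2), ContDiff ℝ (⊤ : ℕ∞) (fun x =>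
        ∑ μ, (((Pi.single a 1 + Pi.single b 1 : Fin 3 → ℝ) μ : ℝ) : ℂ) * A μ x i j) :=
      fun i j => ContDiff.sum fun μ _ => contDiff_const.mul (hA μ i j)
    have hform : (fun x =>
        (-(∑ μ, (((Pi.single a 1 + Pi.single b 1 : Fin 3 → ℝ) μ : ℝ) : ℂ) • A μ x).det).re)
        = fun x => Complex.reCLM (-(
          (∑ μ, (((Pi.single a 1 + Pi.single b 1 : Fin 3 → ℝ) μ : ℝ) : ℂ) * A μ x 0 0)
            * (∑ μ, (((Pi.single a 1 + Pi.single b 1 : Fin 3 → ℝ) μ : ℝ) : ℂ) * A μ x 1 1)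
          - (∑ μ, (((Pi.single a 1 + Pi.single b 1 : Fin 3 → ℝ) μ : ℝ) : ℂ) * A μ x 0 1)
            * (∑ μ, (((Pi.single a 1 + Pi.single b 1 : Fin 3 → ℝ) μ : ℝ) : ℂ) * A μ x 1 0))) := by
      funext x
      simp [Matrix.det_fin_two, Matrix.sum_apply]
    rw [hform]
    exact Complex.reCLM.contDiff.comp
      (((((hN 0 0).mul (hN 1 1)).sub ((hN 0 1).mul (hN 1 0)))).neg)
  have hGCD : ∀ (a b : Fin 3), ContDiff ℝ (⊤ : ℕ∞) (fun x => G x a b) := by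
    intro a b
    have hform : (fun x => G x a b) = fun x =>
        ((-(∑ μ, (((Pi.single a 1 + Pi.single b 1 : Fin 3 → ℝ) μ : ℝ) : ℂ) • A μ x).det).re
          - (-(∑ μ, (((Pi.single a 1 + Pi.single a 1 : Fin 3 → ℝ) μ : ℝ) : ℂ) • A μ x).det).re / 4
          - (-(∑ μ, (((Pi.single b 1 + Pi.single b 1 : Fin 3 → ℝ) μ : ℝ) : ℂ) • A μ x).det).re / 4) / 2 := by
      funext x
      have h1 := hqR a b x
      have h2 := hqR a a x
      have h3 := hqR b b x
      have hsymm := (hGsymm x).apply a b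
      linarith
    rw [hform]
    exact (((hDCD a b).sub ((hDCD a a).div_const 4)).sub ((hDCD b b).div_const 4)).div_const 2
  -- ## Step 2: det G ≠ 0
  have hdetG : ∀ x, (G x).det ≠ 0 := by
    intro x h
    obtain ⟨v, hv0, hv⟩ := Matrix.exists_mulVec_eq_zero_iff.mpr h
    have h1 : ∑ α, ∑ β, G x α β * v α * v β = 0 := by
      have hc : ∀ α, ∑ β, G x α β * v α * v β = v α * (G x *ᵥ v) α := by
        intro α
        simp only [Matrix.mulVec, dotProduct, Finset.mul_sum]
        exact Finset.sum_congr rfl fun β _ => by ring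
      rw [Finset.sum_congr rfl fun α _ => hc α, hv]
      simp
    have h2 := hG x v
    rw [h1] at h2
    simp only [Complex.ofReal_zero, neg_eq_zero] at h2
    have h3 := hell x v hv0
    rw [Matrix.isUnit_iff_isUnit_det] at h3
    exact h3.ne_zero h2
  -- ## Step 3: smoothness of entries of G⁻¹
  have hdetCD : ContDiff ℝ (⊤ : ℕ∞) (fun x => (G x).det) := by
    have hform : (fun x => (G x).det) = fun x =>
        G x 0 0 * G x 1 1 * G x 2 2 - G x 0 0 * G x 1 2 * G x 2 1
          - G x 0 1 * G x 1 0 * G x 2 2 + G x 0 1 * G x 1 2 * G x 2 0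
          + G x 0 2 * G x 1 0 * G x 2 1 - G x 0 2 * G x 1 1 * G x 2 0 := by
      funext x; exact Matrix.det_fin_three _
    rw [hform]
    exact ((((((hGCD 0 0).mul (hGCD 1 1)).mul (hGCD 2 2)).sub
        (((hGCD 0 0).mul (hGCD 1 2)).mul (hGCD 2 1))).sub
        (((hGCD 0 1).mul (hGCD 1 0)).mul (hGCD 2 2))).add
        (((hGCD 0 1).mul (hGCD 1 2)).mul (hGCD 2 0))).add
        ((((hGCD 0 2).mul (hGCD 1 0)).mul (hGCD 2 1)))
        |>.sub (((hGCD 0 2).mul (hGCD 1 1)).mul (hGCD 2 0))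
  have hadjCD : ∀ (a b : Fin 3), ContDiff ℝ (⊤ : ℕ∞) (fun x => (G x).adjugate a b) := by
    intro a b
    have hU : ∀ (k l : Fin 3), ContDiff ℝ (⊤ : ℕ∞)
        (fun x => ((G x).updateRow b (Pi.single a 1)) k l) := by
      intro k l
      simp only [Matrix.updateRow_apply]
      split_ifs
      · exact contDiff_const
      · exact hGCD k l
    have hform : (fun x => (G x).adjugate a b)
        = fun x => ((G x).updateRow b (Pi.single a 1)) 0 0
            * ((G x).updateRow b (Pi.single a 1)) 1 1 * ((G x).updateRow b (Pi.single a 1)) 2 2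
          - ((G x).updateRow b (Pi.single a 1)) 0 0 * ((G x).updateRow b (Pi.single a 1)) 1 2
            * ((G x).updateRow b (Pi.single a 1)) 2 1
          - ((G x).updateRow b (Pi.single a 1)) 0 1 * ((G x).updateRow b (Pi.single a 1)) 1 0
            * ((G x).updateRow b (Pi.single a 1)) 2 2
          + ((G x).updateRow b (Pi.single a 1)) 0 1 * ((G x).updateRow b (Pi.single a 1)) 1 2
            * ((G x).updateRow b (Pi.single a 1)) 2 0
          + ((G x).updateRow b (Pi.single a 1)) 0 2 * ((G x).updateRow b (Pi.single a 1)) 1 0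
            * ((G x).updateRow b (Pi.single a 1)) 2 1
          - ((G x).updateRow b (Pi.single a 1)) 0 2 * ((G x).updateRow b (Pi.single a 1)) 1 1
            * ((G x).updateRow b (Pi.single a 1)) 2 0 := by
      funext x
      rw [Matrix.adjugate_apply, Matrix.det_fin_three]
    rw [hform]
    exact ((((((hU 0 0).mul (hU 1 1)).mul (hU 2 2)).sub
        (((hU 0 0).mul (hU 1 2)).mul (hU 2 1))).sub
        (((hU 0 1).mul (hU 1 0)).mul (hU 2 2))).add
        (((hU 0 1).mul (hU 1 2)).mul (hU 2 0))).add
        ((((hU 0 2).mul (hU 1 0)).mul (hU 2 1)))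
        |>.sub (((hU 0 2).mul (hU 1 1)).mul (hU 2 0))
  have hinvCD : ∀ (a b : Fin 3), ContDiff ℝ (⊤ : ℕ∞) (fun x => (G x)⁻¹ a b) := by
    intro a b
    have hform : (fun x => (G x)⁻¹ a b) = fun x => ((G x).det)⁻¹ * (G x).adjugate a b := by
      funext x
      rw [Matrix.inv_def, Ring.inverse_eq_inv']
      rfl
    rw [hform]
    exact (hdetCD.inv hdetG).mul (hadjCD a b)
  -- ## Step 4: entrywise smoothness of E
  have hACD : ∀ α, CD (A α) := fun α i j => hA α i j
  have hpdCD : ∀ (γ α : Fin 3), CD (fun x => pdM γ (A α) x) := by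
    intro γ α i j
    have h1 : ContDiff ℝ (⊤ : ℕ∞) (fun x => fderiv ℝ (fun y => A α y i j) x) :=
      (hA α i j).fderiv_right (by simp)
    exact (ContinuousLinearMap.apply ℝ ℂ (Pi.single γ 1 : Fin 3 → ℝ)).contDiff.comp h1
  have hECD : CD E := by
    rw [hEdef]
    exact CD.smul contDiff_const <| CD.sum _ _ fun α _ => CD.sum _ _ fun β _ =>
      CD.smul (Complex.ofRealCLM.contDiff.comp (hinvCD α β)) <| CD.sum _ _ fun γ _ =>
        ((((hpdCD γ α).mul (hACD β)).mul (hACD γ)).sub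
          (((hACD γ).mul (hACD β)).mul (hpdCD γ α))).add
          ((((hpdCD γ β).mul (hACD α)).mul (hACD γ))) |>.sub
          (((hACD γ).mul (hACD α)).mul (hpdCD γ β))
  -- ## Step 5: E x is a scalar matrix
  have hscal : ∀ x, ∃ c : ℂ, E x = c • 1 := by
    intro x
    have hmem : E x ∈ Submodule.span ℂ {(1 : Matrix (Fin 2) (Fin 2) ℂ)} := by
      rw [hEdef]
      refine Submodule.smul_mem _ _ (Submodule.sum_mem _ fun α _ =>
        Submodule.sum_mem _ fun β _ => Submodule.smul_mem _ _
          (Submodule.sum_mem _ fun γ _ => ?_))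
      have h1 := key (pdM γ (A α) x) (A β x) (A γ x)
        (pdM_trace (A α) (hA α) (hATr α) γ x) (hATr β x) (hATr γ x)
      have h2 := key (pdM γ (A β) x) (A α x) (A γ x)
        (pdM_trace (A β) (hA β) (hATr β) γ x) (hATr α x) (hATr γ x)
      have hsplit : pdM γ (A α) x * A β x * A γ x - A γ x * A β x * pdM γ (A α) x
            + pdM γ (A β) x * A α x * A γ x - A γ x * A α x * pdM γ (A β) x
          = (pdM γ (A α) x * A β x * A γ x - A γ x * A β x * pdM γ (A α) x)
            + (pdM γ (A β) x * A α x * A γ x - A γ x * A α x * pdM γ (A β) x) := by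
        abel
      rw [hsplit, h1, h2]
      exact Submodule.add_mem _
        (Submodule.smul_mem _ _ (Submodule.mem_span_singleton_self _))
        (Submodule.smul_mem _ _ (Submodule.mem_span_singleton_self _))
    obtain ⟨c, hc⟩ := Submodule.mem_span_singleton.mp hmem
    exact ⟨c, hc.symm⟩
  -- ## Step 6: E x is Hermitian
  have hEstar : ∀ x, star (E x) = E x := by
    intro x
    have hAst : ∀ α, star (A α x) = A α x := fun α => by
      rw [Matrix.star_eq_conjTranspose]; exact hAHerm α x
    have hPst : ∀ γ α, star (pdM γ (A α) x) = pdM γ (A α) x :=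
      fun γ α => pdM_star (A α) (hAHerm α) γ x
    have hTst : ∀ (α β γ : Fin 3),
        star (pdM γ (A α) x * A β x * A γ x - A γ x * A β x * pdM γ (A α) x
          + pdM γ (A β) x * A α x * A γ x - A γ x * A α x * pdM γ (A β) x)
        = -(pdM γ (A α) x * A β x * A γ x - A γ x * A β x * pdM γ (A α) x
          + pdM γ (A β) x * A α x * A γ x - A γ x * A α x * pdM γ (A β) x) := by
      intro α β γ
      simp only [star_sub, star_add, StarMul.star_mul, hAst, hPst]
      noncomm_ring
    rw [hEdef]
    simp only [star_smul, star_sum, hTst, star_neg, star_div₀, Complex.star_def,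
      Complex.conj_I, Complex.conj_ofReal, smul_neg, Finset.sum_neg_distrib,
      neg_smul, neg_neg, neg_div, map_ofNat]
  -- ## Step 7: assemble
  refine ⟨fun x => (E x 0 0).re, ?_, ?_⟩
  · exact Complex.reCLM.contDiff.comp (hECD 0 0)
  · intro x
    show E x = ((((E x 0 0).re : ℝ)) : ℂ) • 1
    obtain ⟨c, hc⟩ := hscal x
    have hc00 : E x 0 0 = c := by rw [hc]; simp [Matrix.one_apply]
    have hreal : (starRingEnd ℂ) c = c := by
      have := hEstar x
      rw [hc, star_smul, star_one] at this
      have h00 := congrFun (congrFun this 0) 0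
      simpa [Matrix.one_apply] using h00
    rw [hc00, hc, Complex.conj_eq_iff_re.mp hreal]

end
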